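/- arXiv:2201.05182 — 8 statements merged into one kernel-verified Lean document; each statement's English description precedes it below -/
import Mathlib

section
/- For every c > 0 and every μ̄ ∈ [0,1], the discriminant Δ = (c² + 2cμ̄ − c − μ̄ + μ̄²)² − 4(c² + cμ̄)(−2c − 1 + cμ̄ + μ̄²) is strictly positive; consequently the quadratic equation (c² + cμ̄)x² + (c² + 2cμ̄ − c − μ̄ + μ̄²)x + (−2c − 1 + cμ̄ + μ̄²) = 0 has exactly two distinct real roots, one strictly positive and one strictly negative. -/
theorem stmt_2 (c μ : ℝ) (hc : 0 < c) (hμ : μ ∈ Set.Icc (0 : ℝ) 1) :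
    0 < (c ^ 2 + 2 * c * μ - c - μ + μ ^ 2) ^ 2
        - 4 * (c ^ 2 + c * μ) * (-2 * c - 1 + c * μ + μ ^ 2) ∧
    ∃ x y : ℝ, x < 0 ∧ 0 < y ∧
      ∀ z : ℝ,
        (c ^ 2 + c * μ) * z ^ 2 + (c ^ 2 + 2 * c * μ - c - μ + μ ^ 2) * z
          + (-2 * c - 1 + c * μ + μ ^ 2) = 0 ↔ z = x ∨ z = y := by
  obtain ⟨hμ0, hμ1⟩ := hμ
  set a : ℝ := c ^ 2 + c * μ with ha_def
  set b : ℝ := c ^ 2 + 2 * c * μ - c - μ + μ ^ 2 with hb_def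
  set k : ℝ := -2 * c - 1 + c * μ + μ ^ 2 with hk_def
  have ha : 0 < a := by positivity
  have hk : k < 0 := by nlinarith
  have hD : 0 < b ^ 2 - 4 * a * k := by nlinarith
  refine ⟨hD, ?_⟩
  set Δ : ℝ := b ^ 2 - 4 * a * k with hΔ_def
  have hs2 : Δ = (Real.sqrt Δ) ^ 2 := (Real.sq_sqrt hD.le).symm
  set s : ℝ := Real.sqrt Δ with hs_def
  have hs0 : 0 ≤ s := Real.sqrt_nonneg _
  have hsb : b < s := by nlinarith [sq_abs b, abs_nonneg b, le_abs_self b]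
  have hsnb : -b < s := by nlinarith [sq_abs b, abs_nonneg b, neg_le_abs b]
  refine ⟨(-b - s) / (2 * a), (-b + s) / (2 * a), ?_, ?_, ?_⟩
  · apply div_neg_of_neg_of_pos <;> linarith
  · apply div_pos <;> linarith
  · intro z
    have := quadratic_eq_zero_iff ha.ne' (show discrim a b k = s * s by rw [discrim]; nlinarith [hs2]) z
    rw [show z ^ 2 = z * z by ring, this]
    tauto
end

section
/- For every c > 0 and every μ̄ ∈ [0,1], the pair (U₁(c,μ̄), U₂(c,μ̄)) is the unique pair of nonnegative real numbers (u₁,u₂) satisfying the best-response system u₁ = ((1−μ̄) + 1/(u₂+1))/c and u₂ = (μ̄ + 1/(u₁+1))/c; moreover both U₁(c,μ̄) > 0 and U₂(c,μ̄) > 0. -/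
/-- Equilibrium advertisement efficiency of major player 1 in the two-major-player
game, given unit advertisement cost `c` and mean consumer preference `m`. -/
noncomputable def U1 (c m : ℝ) : ℝ :=
  -(m ^ 2 + 2 * c * m - m - c + c ^ 2 -
      Real.sqrt ((c + m) * (c ^ 2 + 5 * c - m ^ 2 + m) * (c - m + 1))) / (2 * c * (c + m))

/-- Equilibrium advertisement efficiency of major player 2 in the two-major-player
game, given unit advertisement cost `c` and mean consumer preference `m`. -/
noncomputable def U2 (c m : ℝ) : ℝ :=
  (m - c + Real.sqrt ((c + m) * (c ^ 2 + 5 * c - m ^ 2 + m) / (c - m + 1))) / (2 * c)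

/-!
Eliminating `u₁` from the best-response system turns it into a quadratic equation for `u₂` with
positive leading coefficient and negative constant term; its roots have opposite signs, so the
system has at most one nonnegative solution. Conversely, the positive roots of the two quadratics
(one per player) solve the system, and `U1`, `U2` are exactly these roots, written out for the
preference weights `1 - μ` and `μ`.
-/

theorem eq_of_quadratic_eq_zero_of_nonneg {A B C x y : ℝ} (hA : 0 ≤ A) (hC : C < 0)
    (hx : 0 ≤ x) (hy : 0 ≤ y) (h₁ : A * x ^ 2 + B * x + C = 0) (h₂ : A * y ^ 2 + B * y + C = 0) :
    x = y := by
  have hfac : (x - y) * (A * (x + y) + B) = 0 := by linear_combination h₁ - h₂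
  rcases mul_eq_zero.1 hfac with h | hB
  · linarith
  · -- Vieta: otherwise `A * x * y = C`, which has the wrong sign.
    have hprod : A * x * y = C := by linear_combination x * hB - h₁
    nlinarith [mul_nonneg (mul_nonneg hA hx) hy]

section BestResponse

variable {c p q u₁ u₂ : ℝ}

theorem quadratic_of_bestResponse (hc : c ≠ 0) (h₁ : u₁ + 1 ≠ 0) (h₂ : u₂ + 1 ≠ 0)
    (hu₁ : u₁ = (p + 1 / (u₂ + 1)) / c) (hu₂ : u₂ = (q + 1 / (u₁ + 1)) / c) :
    c * (c + p) * u₂ ^ 2 + (c - q) * (c + p) * u₂ + -(q * (c + p) + q + c) = 0 := by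
  have e₁ : c * u₁ * (u₂ + 1) = p * (u₂ + 1) + 1 := by rw [hu₁]; field_simp
  have e₂ : c * u₂ * (u₁ + 1) = q * (u₁ + 1) + 1 := by rw [hu₂]; field_simp
  linear_combination c * (u₂ + 1) * e₂ - (c * u₂ - q) * e₁

theorem bestResponse_unique (hc : 0 < c) (hp : 0 ≤ p) (hq : 0 ≤ q) {v₁ v₂ : ℝ}
    (hu₁0 : 0 ≤ u₁) (hu₂0 : 0 ≤ u₂) (hv₁0 : 0 ≤ v₁) (hv₂0 : 0 ≤ v₂)
    (hu₁ : u₁ = (p + 1 / (u₂ + 1)) / c) (hu₂ : u₂ = (q + 1 / (u₁ + 1)) / c)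
    (hv₁ : v₁ = (p + 1 / (v₂ + 1)) / c) (hv₂ : v₂ = (q + 1 / (v₁ + 1)) / c) :
    u₁ = v₁ ∧ u₂ = v₂ := by
  have h₂ : u₂ = v₂ := by
    refine eq_of_quadratic_eq_zero_of_nonneg (by positivity) (by nlinarith) hu₂0 hv₂0
      (quadratic_of_bestResponse hc.ne' ?_ ?_ hu₁ hu₂)
      (quadratic_of_bestResponse hc.ne' ?_ ?_ hv₁ hv₂) <;> positivity
  exact ⟨by rw [hu₁, hv₁, h₂], h₂⟩

end BestResponse

noncomputable def equilibriumRadical (c p q : ℝ) : ℝ :=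
  √((c + p) * (c + q) * ((c + p) * (c + q) + 4 * c))

/-- The positive root of `c (c + q) u² + (c - p) (c + q) u - (p (c + q) + p + c)`, the quadratic
(`quadratic_of_bestResponse`) satisfied by the efficiency `u` of a player with preference weight
`p` whose opponent has weight `q`. -/
noncomputable def equilibriumEfficiency (c p q : ℝ) : ℝ :=
  ((p - c) * (c + q) + equilibriumRadical c p q) / (2 * c * (c + q))

section Equilibrium

variable {c p q : ℝ}

theorem equilibriumRadical_comm (c p q : ℝ) :
    equilibriumRadical c q p = equilibriumRadical c p q := by
  rw [equilibriumRadical, equilibriumRadical, mul_comm (c + q)]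

theorem equilibriumRadical_sq (hc : 0 < c) (hp : 0 ≤ p) (hq : 0 ≤ q) :
    equilibriumRadical c p q ^ 2 = (c + p) * (c + q) * ((c + p) * (c + q) + 4 * c) :=
  Real.sq_sqrt (by positivity)

theorem mul_lt_equilibriumRadical (hc : 0 < c) (hp : 0 ≤ p) (hq : 0 ≤ q) :
    (c + p) * (c + q) < equilibriumRadical c p q := by
  have hxy : 0 < (c + p) * (c + q) := by positivity
  exact (Real.lt_sqrt hxy.le).2 (by nlinarith)

theorem equilibriumEfficiency_pos (hc : 0 < c) (hp : 0 ≤ p) (hq : 0 ≤ q) :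
    0 < equilibriumEfficiency c p q := by
  have := mul_lt_equilibriumRadical hc hp hq
  exact div_pos (by nlinarith) (by positivity)

theorem one_div_equilibriumEfficiency_add_one (hc : 0 < c) (hp : 0 ≤ p) (hq : 0 ≤ q) :
    1 / (equilibriumEfficiency c p q + 1) =
      (equilibriumRadical c p q - (c + p) * (c + q)) / (2 * (c + p)) := by
  have hs := mul_lt_equilibriumRadical hc hp hq
  have hadd : equilibriumEfficiency c p q + 1 =
      ((c + p) * (c + q) + equilibriumRadical c p q) / (2 * c * (c + q)) := by
    rw [equilibriumEfficiency]
    field_simp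
    ring
  have hxy : 0 < (c + p) * (c + q) := by positivity
  rw [hadd, one_div_div, div_eq_div_iff (by linarith) (by positivity)]
  linear_combination -equilibriumRadical_sq hc hp hq

theorem equilibriumEfficiency_eq_bestResponse (hc : 0 < c) (hp : 0 ≤ p) (hq : 0 ≤ q) :
    equilibriumEfficiency c p q = (p + 1 / (equilibriumEfficiency c q p + 1)) / c := by
  rw [one_div_equilibriumEfficiency_add_one hc hq hp, equilibriumRadical_comm,
    equilibriumEfficiency]
  field_simp
  ring

end Equilibrium

theorem U1_eq_equilibriumEfficiency (c μ : ℝ) : U1 c μ = equilibriumEfficiency c (1 - μ) μ := by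
  have hrad : (c + μ) * (c ^ 2 + 5 * c - μ ^ 2 + μ) * (c - μ + 1) =
      (c + (1 - μ)) * (c + μ) * ((c + (1 - μ)) * (c + μ) + 4 * c) := by ring
  rw [U1, equilibriumEfficiency, equilibriumRadical, hrad]
  ring

theorem U2_eq_equilibriumEfficiency {c μ : ℝ} (h : 0 < c - μ + 1) :
    U2 c μ = equilibriumEfficiency c μ (1 - μ) := by
  have hrad : (c + μ) * (c ^ 2 + 5 * c - μ ^ 2 + μ) / (c - μ + 1) =
      (c + μ) * (c + (1 - μ)) * ((c + μ) * (c + (1 - μ)) + 4 * c) / (c - μ + 1) ^ 2 := by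
    field_simp
    ring
  rw [U2, equilibriumEfficiency, equilibriumRadical, hrad, Real.sqrt_div' _ (by positivity),
    Real.sqrt_sq h.le, show c + (1 - μ) = c - μ + 1 by ring, mul_comm (2 * c) (c - μ + 1), ← div_div _ (c - μ + 1) (2 * c)]
  congr 1
  rw [add_div, mul_div_cancel_right₀ _ h.ne']

theorem stmt_3 (c μ : ℝ) (hc : 0 < c) (hμ : μ ∈ Set.Icc (0 : ℝ) 1) :
    0 < U1 c μ ∧ 0 < U2 c μ ∧
    U1 c μ = (1 - μ + 1 / (U2 c μ + 1)) / c ∧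
    U2 c μ = (μ + 1 / (U1 c μ + 1)) / c ∧
    ∀ u₁ u₂ : ℝ, 0 ≤ u₁ → 0 ≤ u₂ →
      u₁ = (1 - μ + 1 / (u₂ + 1)) / c → u₂ = (μ + 1 / (u₁ + 1)) / c →
      u₁ = U1 c μ ∧ u₂ = U2 c μ := by
  obtain ⟨hμ0, hμ1⟩ := hμ
  have hν0 : 0 ≤ 1 - μ := by linarith
  rw [U1_eq_equilibriumEfficiency, U2_eq_equilibriumEfficiency (by linarith)]
  have hpos₁ := equilibriumEfficiency_pos hc hν0 hμ0
  have hpos₂ := equilibriumEfficiency_pos hc hμ0 hν0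
  have heq₁ := equilibriumEfficiency_eq_bestResponse hc hν0 hμ0
  have heq₂ := equilibriumEfficiency_eq_bestResponse hc hμ0 hν0
  refine ⟨hpos₁, hpos₂, heq₁, heq₂, fun u₁ u₂ hu₁0 hu₂0 hu₁ hu₂ => ?_⟩
  exact bestResponse_unique hc hν0 hμ0 hu₁0 hu₂0 hpos₁.le hpos₂.le hu₁ hu₂ heq₁ heq₂
end

section
/- For every c > 0: if μ̄ ∈ [0, 1/2) then U₁(c,μ̄) > U₂(c,μ̄); if μ̄ = 1/2 then U₁(c,μ̄) = U₂(c,μ̄); and if μ̄ ∈ (1/2, 1] then U₁(c,μ̄) < U₂(c,μ̄). -/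
lemma diff_eq (c m : ℝ) (hc : 0 < c) (hm0 : 0 ≤ m) (hm1 : m ≤ 1) :
    U1 c m - U2 c m =
      (1 - 2 * m) * ((c + m) + Real.sqrt ((c + m) * (c ^ 2 + 5 * c - m ^ 2 + m) / (c - m + 1)))
        / (2 * c * (c + m)) := by
  have hd : 0 < c - m + 1 := by linarith
  have hcm : 0 < c + m := by linarith
  have key : Real.sqrt ((c + m) * (c ^ 2 + 5 * c - m ^ 2 + m) * (c - m + 1)) =
      (c - m + 1) * Real.sqrt ((c + m) * (c ^ 2 + 5 * c - m ^ 2 + m) / (c - m + 1)) := by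
    have h1 : (c + m) * (c ^ 2 + 5 * c - m ^ 2 + m) * (c - m + 1) =
        (c - m + 1) ^ 2 * ((c + m) * (c ^ 2 + 5 * c - m ^ 2 + m) / (c - m + 1)) := by
      field_simp
    rw [h1, Real.sqrt_mul (sq_nonneg _), Real.sqrt_sq hd.le]
  unfold U1 U2
  rw [key]
  field_simp
  ring
theorem stmt_5 (c : ℝ) (hc : 0 < c) :
    (∀ μ : ℝ, μ ∈ Set.Ico (0 : ℝ) (1 / 2) → U2 c μ < U1 c μ) ∧
    U1 c (1 / 2) = U2 c (1 / 2) ∧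
    (∀ μ : ℝ, μ ∈ Set.Ioc (1 / 2 : ℝ) 1 → U1 c μ < U2 c μ) := by
  refine ⟨?_, ?_, ?_⟩
  · intro μ hμ
    obtain ⟨h0, h1⟩ := hμ
    have hd := diff_eq c μ hc h0 (by linarith)
    have hpos : 0 < U1 c μ - U2 c μ := by
      rw [hd]
      apply div_pos
      · apply mul_pos (by linarith)
        have := Real.sqrt_nonneg ((c + μ) * (c ^ 2 + 5 * c - μ ^ 2 + μ) / (c - μ + 1))
        linarith
      · positivity
    linarith
  · have hd := diff_eq c (1/2) hc (by norm_num) (by norm_num)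
    have : U1 c (1/2) - U2 c (1/2) = 0 := by rw [hd]; norm_num
    linarith
  · intro μ hμ
    obtain ⟨h0, h1⟩ := hμ
    have hd := diff_eq c μ hc (by linarith) h1
    have hneg : U1 c μ - U2 c μ < 0 := by
      rw [hd]
      apply div_neg_of_neg_of_pos
      · apply mul_neg_of_neg_of_pos (by linarith)
        have := Real.sqrt_nonneg ((c + μ) * (c ^ 2 + 5 * c - μ ^ 2 + μ) / (c - μ + 1))
        linarith
      · have : 0 < c + μ := by linarith
        positivity
    linarith
end

section
/- For every c > 0 and every ū₀ ∈ [0,1], there exists exactly one μ̄ ∈ [0,1] satisfying the fixed-point equation μ̄ = (U₁(c,μ̄) − U₂(c,μ̄) + 1 + ū₀)/3. Consequently the Nash equilibrium system u₁ = U₁(c,μ̄), u₂ = U₂(c,μ̄), μ̄ = (u₁ − u₂ + 1 + ū₀)/3 has a unique solution (u₁, u₂, μ̄) with μ̄ ∈ [0,1]. -/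
open Set

noncomputable def gapFactor (c m : ℝ) : ℝ := 1 + √(1 + 4 * c / (c ^ 2 + c + m * (1 - m)))

/-- `U1 - U2` on `[0,1]`: writing `a = √(c+m)`, `b = √(c²+5c+m-m²)`, `d = √(c-m+1)`, one has
`U1 = (abd - (m² + 2cm - m - c + c²)) / (2ca²)`, `U2 = (m - c + ab/d) / (2c)` and
`ad = √(c² + c + m(1-m))`. -/
noncomputable def efficiencyGap (c m : ℝ) : ℝ := (1 - 2 * m) * gapFactor c m / (2 * c)

lemma U1_sub_U2 {c m : ℝ} (hc : 0 < c) (hm : m ∈ Icc 0 1) :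
    U1 c m - U2 c m = efficiencyGap c m := by
  obtain ⟨hm0, hm1⟩ := hm
  have hcm : 0 < c + m := by linarith
  have hP : 0 < c ^ 2 + 5 * c - m ^ 2 + m := by nlinarith
  have hA : 0 < c - m + 1 := by linarith
  set a := √(c + m)
  set b := √(c ^ 2 + 5 * c - m ^ 2 + m)
  set d := √(c - m + 1)
  have ha2 : a ^ 2 = c + m := Real.sq_sqrt hcm.le
  have hd2 : d ^ 2 = c - m + 1 := Real.sq_sqrt hA.le
  have hap : 0 < a := Real.sqrt_pos.mpr hcm
  have hdp : 0 < d := Real.sqrt_pos.mpr hA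
  have h1 : √((c + m) * (c ^ 2 + 5 * c - m ^ 2 + m) * (c - m + 1)) = a * b * d := by
    rw [Real.sqrt_mul (by positivity), Real.sqrt_mul hcm.le]
  have h2 : √((c + m) * (c ^ 2 + 5 * c - m ^ 2 + m) / (c - m + 1)) = a * b / d := by
    rw [Real.sqrt_div (by positivity), Real.sqrt_mul hcm.le]
  have h3 : √(1 + 4 * c / (c ^ 2 + c + m * (1 - m))) = b / (a * d) := by
    have hD : c ^ 2 + c + m * (1 - m) = (a * d) ^ 2 := by rw [mul_pow, ha2, hd2]; ring
    rw [hD, one_add_div (by positivity), ← hD, show c ^ 2 + c + m * (1 - m) + 4 * c =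
      c ^ 2 + 5 * c - m ^ 2 + m by ring, hD, Real.sqrt_div hP.le, Real.sqrt_sq (by positivity)]
  rw [U1, U2, h1, h2, efficiencyGap, gapFactor, h3, ← ha2]
  field_simp
  linear_combination (a * b) * hd2 - (d * (1 - m - c) + a * b) * ha2

lemma gapFactor_nonneg (c m : ℝ) : 0 ≤ gapFactor c m := by
  unfold gapFactor; positivity

lemma gapFactor_le_of_le {c x y : ℝ} (hc : 0 < c) (hx : 0 ≤ x * (1 - x))
    (hxy : x * (1 - x) ≤ y * (1 - y)) : gapFactor c y ≤ gapFactor c x := by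
  unfold gapFactor
  gcongr

/-- `gapFactor c m` depends only on `m(1-m)` and decreases with it, so it is symmetric about `1/2`,
where the sign factor `1 - 2m` changes sign. -/
lemma efficiencyGap_antitoneOn {c : ℝ} (hc : 0 < c) : AntitoneOn (efficiencyGap c) (Icc 0 1) := by
  rintro x ⟨hx0, hx1⟩ y ⟨hy0, hy1⟩ hxy
  unfold efficiencyGap
  gcongr ?_ / _
  have hgx := gapFactor_nonneg c x
  have hgy := gapFactor_nonneg c y
  rcases le_or_gt y (1 / 2) with hy | hy
  · have := gapFactor_le_of_le hc (by nlinarith) (show x * (1 - x) ≤ y * (1 - y) by nlinarith)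
    exact mul_le_mul (by linarith) this hgy (by linarith)
  rcases le_or_gt (1 / 2) x with hx | hx
  · have := gapFactor_le_of_le hc (by nlinarith) (show y * (1 - y) ≤ x * (1 - x) by nlinarith)
    nlinarith [mul_le_mul (by linarith : 2 * x - 1 ≤ 2 * y - 1) this hgx (by linarith)]
  · nlinarith [mul_nonneg (by linarith : (0:ℝ) ≤ 2 * y - 1) hgy,
      mul_nonneg (by linarith : (0:ℝ) ≤ 1 - 2 * x) hgx]

lemma continuousOn_efficiencyGap {c : ℝ} (hc : 0 < c) :
    ContinuousOn (efficiencyGap c) (Icc 0 1) := by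
  have hD : ∀ m ∈ Icc (0 : ℝ) 1, c ^ 2 + c + m * (1 - m) ≠ 0 := fun m hm => by
    have := mul_nonneg hm.1 (sub_nonneg.2 hm.2); positivity
  unfold efficiencyGap gapFactor
  fun_prop (disch := assumption)

lemma existsUnique_eq_of_strictMonoOn {f : ℝ → ℝ} {a b k : ℝ} (hab : a ≤ b)
    (hf : ContinuousOn f (Icc a b)) (hmono : StrictMonoOn f (Icc a b)) (hk : k ∈ Icc (f a) (f b)) :
    ∃! m, m ∈ Icc a b ∧ f m = k := by
  obtain ⟨m, hm, hfm⟩ := intermediate_value_Icc hab hf hk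
  exact ⟨m, ⟨hm, hfm⟩, fun m' ⟨hm', hfm'⟩ => hmono.injOn hm' hm (hfm'.trans hfm.symm)⟩

lemma existsUnique_three_mul_sub_efficiencyGap_eq {c u : ℝ} (hc : 0 < c) (hu : u ∈ Icc 0 1) :
    ∃! m, m ∈ Icc 0 1 ∧ 3 * m - efficiencyGap c m = 1 + u := by
  have hmono : StrictMonoOn (fun m => 3 * m - efficiencyGap c m) (Icc 0 1) :=
    (strictMono_mul_left_of_pos three_pos).strictMonoOn _ |>.add_monotone
      (efficiencyGap_antitoneOn hc).neg
  have hcont : ContinuousOn (fun m => 3 * m - efficiencyGap c m) (Icc 0 1) :=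
    (continuous_const.mul continuous_id).continuousOn.sub (continuousOn_efficiencyGap hc)
  have hgap₀ : 0 ≤ efficiencyGap c 0 := by
    unfold efficiencyGap; have := gapFactor_nonneg c 0; positivity
  have hgap₁ : efficiencyGap c 1 ≤ 0 := by
    unfold efficiencyGap; have := gapFactor_nonneg c 1
    exact div_nonpos_of_nonpos_of_nonneg (by nlinarith) (by positivity)
  exact existsUnique_eq_of_strictMonoOn zero_le_one hcont hmono
    ⟨by linarith [hu.1], by linarith [hu.2]⟩

lemma existsUnique_prod_of_existsUnique {α β γ : Type*} {p : γ → Prop} {f : γ → α} {g : γ → β}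
    {F : α → β → γ} (h : ∃! z, p z ∧ z = F (f z) (g z)) :
    ∃! t : α × β × γ, p t.2.2 ∧ t.1 = f t.2.2 ∧ t.2.1 = g t.2.2 ∧ t.2.2 = F t.1 t.2.1 := by
  obtain ⟨z, hz, huniq⟩ := h
  refine ⟨(f z, g z, z), ⟨hz.1, rfl, rfl, hz.2⟩, ?_⟩
  rintro ⟨x, y, z'⟩ ⟨hp, hx, hy, hF⟩
  dsimp only at hp hx hy hF
  subst hx hy
  obtain rfl := huniq z' ⟨hp, hF⟩
  rfl

theorem stmt_8 (c ubar₀ : ℝ) (hc : 0 < c) (h₀ : ubar₀ ∈ Set.Icc (0 : ℝ) 1) :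
    (∃! m : ℝ, m ∈ Set.Icc (0 : ℝ) 1 ∧ m = (U1 c m - U2 c m + 1 + ubar₀) / 3) ∧
    ∃! t : ℝ × ℝ × ℝ, t.2.2 ∈ Set.Icc (0 : ℝ) 1 ∧
      t.1 = U1 c t.2.2 ∧ t.2.1 = U2 c t.2.2 ∧
      t.2.2 = (t.1 - t.2.1 + 1 + ubar₀) / 3 := by
  have hmean : ∃! m : ℝ, m ∈ Set.Icc (0 : ℝ) 1 ∧ m = (U1 c m - U2 c m + 1 + ubar₀) / 3 := by
    refine (existsUnique_congr fun m => ?_).1 (existsUnique_three_mul_sub_efficiencyGap_eq hc h₀)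
    refine and_congr_right fun hm => ?_
    rw [U1_sub_U2 hc hm]
    constructor <;> intro h <;> linarith
  exact ⟨hmean,
    existsUnique_prod_of_existsUnique (F := fun u₁ u₂ => (u₁ - u₂ + 1 + ubar₀) / 3) hmean⟩
end

section
/- Let c > 0, ū₀ ∈ [0,1], and let μ̄* be the unique μ̄ ∈ [0,1] satisfying μ̄ = (U₁(c,μ̄) − U₂(c,μ̄) + 1 + ū₀)/3. If ū₀ ∈ [0, 1/2] then μ̄* ∈ [(1+ū₀)/3, 1/2]; if ū₀ ∈ [1/2, 1] then μ̄* ∈ [1/2, (1+ū₀)/3]; and if ū₀ = 1/2 then μ̄* = 1/2 for every c > 0. -/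
theorem stmt_9 (c ubar₀ mstar : ℝ) (hc : 0 < c) (h₀ : ubar₀ ∈ Set.Icc (0 : ℝ) 1)
    (hmem : mstar ∈ Set.Icc (0 : ℝ) 1)
    (hfix : mstar = (U1 c mstar - U2 c mstar + 1 + ubar₀) / 3) :
    (ubar₀ ∈ Set.Icc (0 : ℝ) (1 / 2) →
      mstar ∈ Set.Icc ((1 + ubar₀) / 3) (1 / 2)) ∧
    (ubar₀ ∈ Set.Icc (1 / 2 : ℝ) 1 →
      mstar ∈ Set.Icc (1 / 2 : ℝ) ((1 + ubar₀) / 3)) ∧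
    (ubar₀ = 1 / 2 → mstar = 1 / 2) := by
  obtain ⟨hu0, hu1⟩ := h₀
  obtain ⟨hm0, hm1⟩ := hmem
  set a : ℝ := (c + mstar) * (c ^ 2 + 5 * c - mstar ^ 2 + mstar) / (c - mstar + 1) with ha_def
  have ht : 0 < c - mstar + 1 := by linarith
  have hcm : 0 < c + mstar := by linarith
  have hA : 0 < c ^ 2 + 5 * c - mstar ^ 2 + mstar := by nlinarith
  have ha : 0 ≤ a := by
    apply div_nonneg _ ht.le
    positivity
  have h1 : (c + mstar) * (c ^ 2 + 5 * c - mstar ^ 2 + mstar) * (c - mstar + 1)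
      = a * (c - mstar + 1) ^ 2 := by
    rw [ha_def]; field_simp
  have key : U1 c mstar - U2 c mstar
      = (1 - 2 * mstar) * ((c + mstar) + Real.sqrt a) / (2 * c * (c + mstar)) := by
    unfold U1 U2
    rw [h1, Real.sqrt_mul ha, Real.sqrt_sq ht.le, ← ha_def]
    field_simp
    ring
  set S : ℝ := Real.sqrt a with hS_def
  have hS : 0 ≤ S := Real.sqrt_nonneg a
  set K : ℝ := ((c + mstar) + S) / (2 * c * (c + mstar)) with hK_def
  have hK : 0 < K := by
    apply div_pos (by linarith) (by positivity)
  have heq : 3 * mstar - 1 - ubar₀ = (1 - 2 * mstar) * K := by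
    have h2 := hfix
    rw [key] at h2
    rw [hK_def, ← mul_div_assoc]
    linarith [h2]
  -- sign analysis
  have main1 : ubar₀ ≤ 1 / 2 → (1 + ubar₀) / 3 ≤ mstar ∧ mstar ≤ 1 / 2 := by
    intro hu
    have hle : mstar ≤ 1 / 2 := by
      by_contra h
      push_neg at h
      have h' : (0:ℝ) ≤ 2 * mstar - 1 := by linarith
      nlinarith [mul_nonneg hK.le h']
    have h' : (0:ℝ) ≤ 1 - 2 * mstar := by linarith
    have := mul_nonneg h' hK.le
    constructor
    · nlinarith
    · exact hle
  have main2 : 1 / 2 ≤ ubar₀ → 1 / 2 ≤ mstar ∧ mstar ≤ (1 + ubar₀) / 3 := by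
    intro hu
    have hle : 1 / 2 ≤ mstar := by
      by_contra h
      push_neg at h
      have h' : (0:ℝ) ≤ 1 - 2 * mstar := by linarith
      nlinarith [mul_nonneg h' hK.le]
    have h' : (0:ℝ) ≤ 2 * mstar - 1 := by linarith
    have := mul_nonneg h' hK.le
    constructor
    · exact hle
    · nlinarith
  refine ⟨fun h => ⟨(main1 h.2).1, (main1 h.2).2⟩,
    fun h => ⟨(main2 h.1).1, (main2 h.1).2⟩, fun h => ?_⟩
  have a1 := main1 (le_of_eq h)
  have a2 := main2 (ge_of_eq h)
  linarith [a1.2, a2.1]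
end

section
/- For every fixed μ̄ ∈ [0,1], U₁(c,μ̄) → 0 and U₂(c,μ̄) → 0 as c → ∞. -/
theorem stmt_11 (μ : ℝ) (hμ : μ ∈ Set.Icc (0 : ℝ) 1) :
    Filter.Tendsto (fun c : ℝ => U1 c μ) Filter.atTop (nhds 0) ∧
    Filter.Tendsto (fun c : ℝ => U2 c μ) Filter.atTop (nhds 0) := by
  obtain ⟨hμ0, hμ1⟩ := hμ
  set F : ℝ → ℝ := fun x =>
    -((μ ^ 2 * x ^ 2 + 2 * μ * x - μ * x ^ 2 - x + 1) -
        Real.sqrt ((1 + μ * x) * (1 + 5 * x - μ ^ 2 * x ^ 2 + μ * x ^ 2) * (1 - μ * x + x))) /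
      (2 * (1 + μ * x)) with hFdef
  set G : ℝ → ℝ := fun x =>
    (μ * x - 1 +
        Real.sqrt ((1 + μ * x) * (1 + 5 * x - μ ^ 2 * x ^ 2 + μ * x ^ 2) / (1 - μ * x + x))) / 2
    with hGdef
  have hinv : Filter.Tendsto (fun c : ℝ => 1 / c) Filter.atTop (nhds 0) := by
    simpa using tendsto_inv_atTop_zero
  have hFcont : ContinuousAt F 0 := by
    apply ContinuousAt.div
    · fun_prop
    · fun_prop
    · norm_num
  have hGcont : ContinuousAt G 0 := by
    have h1 : ContinuousAt
        (fun x : ℝ => (1 + μ * x) * (1 + 5 * x - μ ^ 2 * x ^ 2 + μ * x ^ 2) / (1 - μ * x + x)) 0 :=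
      ContinuousAt.div (by fun_prop) (by fun_prop) (by norm_num)
    have h2 : ContinuousAt (fun x : ℝ =>
        Real.sqrt ((1 + μ * x) * (1 + 5 * x - μ ^ 2 * x ^ 2 + μ * x ^ 2) / (1 - μ * x + x))) 0 :=
      Real.continuous_sqrt.continuousAt.comp h1
    exact ContinuousAt.div ((by fun_prop : ContinuousAt (fun x : ℝ => μ * x - 1) 0).add h2)
      continuousAt_const (by norm_num)
  have hF0 : F 0 = 0 := by
    simp [hFdef, Real.sqrt_one]
  have hG0 : G 0 = 0 := by
    simp [hGdef, Real.sqrt_one]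
  have hFt : Filter.Tendsto (fun c : ℝ => F (1 / c)) Filter.atTop (nhds 0) := by
    rw [← hF0]; exact hFcont.tendsto.comp hinv
  have hGt : Filter.Tendsto (fun c : ℝ => G (1 / c)) Filter.atTop (nhds 0) := by
    rw [← hG0]; exact hGcont.tendsto.comp hinv
  have hev : ∀ᶠ c : ℝ in Filter.atTop, F (1 / c) = U1 c μ ∧ G (1 / c) = U2 c μ := by
    filter_upwards [Filter.eventually_ge_atTop (2 : ℝ)] with c hc
    have hc0 : (0 : ℝ) < c := by linarith
    have hcm : (0 : ℝ) < c + μ := by linarith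
    have hcm1 : (0 : ℝ) < c - μ + 1 := by linarith
    have hq : (0 : ℝ) < c ^ 2 + 5 * c - μ ^ 2 + μ := by nlinarith
    have hQ : (0 : ℝ) ≤ (c + μ) * (c ^ 2 + 5 * c - μ ^ 2 + μ) * (c - μ + 1) := by positivity
    have hR : (0 : ℝ) ≤ (c + μ) * (c ^ 2 + 5 * c - μ ^ 2 + μ) / (c - μ + 1) := by positivity
    constructor
    · have hB : (1 + μ * (1 / c)) * (1 + 5 * (1 / c) - μ ^ 2 * (1 / c) ^ 2 + μ * (1 / c) ^ 2) *
          (1 - μ * (1 / c) + 1 / c)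
          = ((c + μ) * (c ^ 2 + 5 * c - μ ^ 2 + μ) * (c - μ + 1)) / c ^ 4 := by
        field_simp
      have hs4 : Real.sqrt (c ^ 4) = c ^ 2 := by
        rw [show c ^ 4 = (c ^ 2) ^ 2 by ring, Real.sqrt_sq (by positivity)]
      have hsq : Real.sqrt ((1 + μ * (1 / c)) * (1 + 5 * (1 / c) - μ ^ 2 * (1 / c) ^ 2 + μ * (1 / c) ^ 2) *
          (1 - μ * (1 / c) + 1 / c))
          = Real.sqrt ((c + μ) * (c ^ 2 + 5 * c - μ ^ 2 + μ) * (c - μ + 1)) / c ^ 2 := by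
        rw [hB, Real.sqrt_div hQ, hs4]
      show _ = U1 c μ
      rw [hFdef]
      simp only [U1]
      rw [hsq]
      set s := Real.sqrt ((c + μ) * (c ^ 2 + 5 * c - μ ^ 2 + μ) * (c - μ + 1)) with hs
      field_simp
    · have hB : (1 + μ * (1 / c)) * (1 + 5 * (1 / c) - μ ^ 2 * (1 / c) ^ 2 + μ * (1 / c) ^ 2) /
          (1 - μ * (1 / c) + 1 / c)
          = ((c + μ) * (c ^ 2 + 5 * c - μ ^ 2 + μ) / (c - μ + 1)) / c ^ 2 := by
        field_simp
      have hs2 : Real.sqrt (c ^ 2) = c := by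
        rw [Real.sqrt_sq hc0.le]
      have hsq : Real.sqrt ((1 + μ * (1 / c)) * (1 + 5 * (1 / c) - μ ^ 2 * (1 / c) ^ 2 + μ * (1 / c) ^ 2) /
          (1 - μ * (1 / c) + 1 / c))
          = Real.sqrt ((c + μ) * (c ^ 2 + 5 * c - μ ^ 2 + μ) / (c - μ + 1)) / c := by
        rw [hB, Real.sqrt_div hR, hs2]
      show _ = U2 c μ
      rw [hGdef]
      simp only [U2]
      rw [hsq]
      set s := Real.sqrt ((c + μ) * (c ^ 2 + 5 * c - μ ^ 2 + μ) / (c - μ + 1)) with hs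
      rw [show μ * (1 / c) - 1 + s / c = (μ - c + s) / c from by field_simp, div_div,
        mul_comm c 2]
  exact ⟨hFt.congr' (hev.mono fun c h => h.1), hGt.congr' (hev.mono fun c h => h.2)⟩
end

section
/- Fix ū₀ ∈ [0,1] and for each c > 0 let μ̄*(c) denote the unique μ̄ ∈ [0,1] satisfying μ̄ = (U₁(c,μ̄) − U₂(c,μ̄) + 1 + ū₀)/3. Then μ̄*(c) → (1 + ū₀)/3 as c → ∞. -/
lemma sqrt_bounds (c m : ℝ) (hc : 2 ≤ c) (hm0 : 0 ≤ m) (hm1 : m ≤ 1) :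
    c ^ 2 - m ^ 2 + m + 3 * c - 4 ≤
      Real.sqrt ((c + m) * (c ^ 2 + 5 * c - m ^ 2 + m) * (c - m + 1)) ∧
    Real.sqrt ((c + m) * (c ^ 2 + 5 * c - m ^ 2 + m) * (c - m + 1)) ≤
      c ^ 2 - m ^ 2 + m + 3 * c := by
  set B : ℝ := c ^ 2 - m ^ 2 + m + 3 * c with hB
  have hB0 : 0 ≤ B := by nlinarith
  have hP : (c + m) * (c ^ 2 + 5 * c - m ^ 2 + m) * (c - m + 1) = B ^ 2 - 4 * c ^ 2 := by
    rw [hB]; ring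
  constructor
  · rw [hP]
    apply Real.le_sqrt_of_sq_le
    nlinarith
  · rw [hP]
    calc Real.sqrt (B ^ 2 - 4 * c ^ 2) ≤ Real.sqrt (B ^ 2) :=
          Real.sqrt_le_sqrt (by nlinarith)
      _ = B := Real.sqrt_sq hB0

lemma U1_bounds (c m : ℝ) (hc : 2 ≤ c) (hm0 : 0 ≤ m) (hm1 : m ≤ 1) :
    0 ≤ U1 c m ∧ U1 c m ≤ 3 / c := by
  obtain ⟨hS1, hS2⟩ := sqrt_bounds c m hc hm0 hm1
  set S : ℝ := Real.sqrt ((c + m) * (c ^ 2 + 5 * c - m ^ 2 + m) * (c - m + 1)) with hS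
  have hc0 : (0 : ℝ) < c := by linarith
  have hD : (0 : ℝ) < 2 * c * (c + m) := by nlinarith
  unfold U1
  rw [← hS]
  constructor
  · apply div_nonneg _ (le_of_lt hD)
    nlinarith
  · rw [div_le_div_iff₀ hD hc0]
    nlinarith

lemma U2_bounds (c m : ℝ) (hc : 2 ≤ c) (hm0 : 0 ≤ m) (hm1 : m ≤ 1) :
    0 ≤ U2 c m ∧ U2 c m ≤ 3 / c := by
  obtain ⟨hS1, hS2⟩ := sqrt_bounds c m hc hm0 hm1
  set S : ℝ := Real.sqrt ((c + m) * (c ^ 2 + 5 * c - m ^ 2 + m) * (c - m + 1)) with hS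
  have hc0 : (0 : ℝ) < c := by linarith
  have hE : (0 : ℝ) < c - m + 1 := by linarith
  have hP0 : 0 ≤ (c + m) * (c ^ 2 + 5 * c - m ^ 2 + m) * (c - m + 1) :=
    mul_nonneg (mul_nonneg (by linarith) (by nlinarith)) (by linarith)
  have hQ : (c + m) * (c ^ 2 + 5 * c - m ^ 2 + m) / (c - m + 1) =
      ((c + m) * (c ^ 2 + 5 * c - m ^ 2 + m) * (c - m + 1)) / (c - m + 1) ^ 2 := by
    field_simp
  have hsqrtQ : Real.sqrt ((c + m) * (c ^ 2 + 5 * c - m ^ 2 + m) / (c - m + 1)) =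
      S / (c - m + 1) := by
    rw [hQ, Real.sqrt_div hP0, Real.sqrt_sq (le_of_lt hE), hS]
  unfold U2
  rw [hsqrtQ]
  have hSE_lb : c - m ≤ S / (c - m + 1) := by
    rw [le_div_iff₀ hE]; nlinarith
  have hSE_ub : S / (c - m + 1) ≤ c - m + 6 := by
    rw [div_le_iff₀ hE]; nlinarith
  constructor
  · apply div_nonneg _ (by linarith : (0:ℝ) ≤ 2 * c)
    linarith
  · rw [div_le_div_iff₀ (by linarith : (0:ℝ) < 2 * c) hc0]
    nlinarith

theorem stmt_12 (ubar₀ : ℝ) (h₀ : ubar₀ ∈ Set.Icc (0 : ℝ) 1)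
    (mstar : ℝ → ℝ)
    (hm : ∀ c : ℝ, 0 < c → mstar c ∈ Set.Icc (0 : ℝ) 1 ∧
      mstar c = (U1 c (mstar c) - U2 c (mstar c) + 1 + ubar₀) / 3) :
    Filter.Tendsto mstar Filter.atTop (nhds ((1 + ubar₀) / 3)) := by
  have key : ∀ c : ℝ, 2 ≤ c → |mstar c - (1 + ubar₀) / 3| ≤ 1 / c := by
    intro c hc
    have hc0 : (0 : ℝ) < c := by linarith
    obtain ⟨⟨hm0, hm1⟩, heq⟩ := hm c hc0
    obtain ⟨h1a, h1b⟩ := U1_bounds c (mstar c) hc hm0 hm1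
    obtain ⟨h2a, h2b⟩ := U2_bounds c (mstar c) hc hm0 hm1
    rw [abs_le]
    constructor
    · rw [heq]
      have : (0:ℝ) < 1 / c := by positivity
      have h3 : 3 / c = 3 * (1 / c) := by ring
      rw [h3] at h2b
      linarith
    · rw [heq]
      have h3 : 3 / c = 3 * (1 / c) := by ring
      rw [h3] at h1b
      linarith
  rw [Metric.tendsto_atTop]
  intro ε hε
  refine ⟨max 2 (2 / ε), fun c hc => ?_⟩
  have hc2 : 2 ≤ c := le_trans (le_max_left _ _) hc
  have hc0 : (0 : ℝ) < c := by linarith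
  have hcε : 2 / ε ≤ c := le_trans (le_max_right _ _) hc
  have h1 : 1 / c ≤ ε / 2 := by
    rw [div_le_div_iff₀ hc0 (by norm_num : (0:ℝ) < 2)]
    rw [div_le_iff₀ hε] at hcε
    linarith
  have := key c hc2
  rw [Real.dist_eq]
  linarith
end

section
/- For every c > 0, at the Nash equilibrium of the two-major-player game given any mean consumer preference μ̄ ∈ [0,1], neither company abstains from advertising: U₁(c,μ̄) > 0 and U₂(c,μ̄) > 0. In particular, for every μ̄ ∈ [0,1] the pair (0, u₂) for any u₂ ≥ 0, and the pair (u₁, 0) for any u₁ ≥ 0, do not satisfy the best-response system u₁ = ((1−μ̄) + 1/(u₂+1))/c, u₂ = (μ̄ + 1/(u₁+1))/c. -/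
theorem stmt_13 (c : ℝ) (hc : 0 < c) :
    ∀ μ : ℝ, μ ∈ Set.Icc (0 : ℝ) 1 →
      0 < U1 c μ ∧ 0 < U2 c μ ∧
      (∀ u₂ : ℝ, 0 ≤ u₂ →
        ¬((0 : ℝ) = (1 - μ + 1 / (u₂ + 1)) / c ∧ u₂ = (μ + 1 / ((0 : ℝ) + 1)) / c)) ∧
      (∀ u₁ : ℝ, 0 ≤ u₁ →
        ¬(u₁ = (1 - μ + 1 / ((0 : ℝ) + 1)) / c ∧ (0 : ℝ) = (μ + 1 / (u₁ + 1)) / c)) := by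
  intro μ hμ
  obtain ⟨h0, h1⟩ := hμ
  have hcm : 0 < c + μ := by linarith
  have hmid : 0 < c ^ 2 + 5 * c - μ ^ 2 + μ := by nlinarith
  have hcm1 : 0 < c - μ + 1 := by linarith
  refine ⟨?_, ?_, ?_, ?_⟩
  · -- U1
    have hB : 0 < (c + μ) * (c ^ 2 + 5 * c - μ ^ 2 + μ) * (c - μ + 1) := by positivity
    set s := Real.sqrt ((c + μ) * (c ^ 2 + 5 * c - μ ^ 2 + μ) * (c - μ + 1)) with hs
    have hs0 : 0 < s := Real.sqrt_pos.mpr hB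
    have hs2 : s ^ 2 = (c + μ) * (c ^ 2 + 5 * c - μ ^ 2 + μ) * (c - μ + 1) :=
      Real.sq_sqrt hB.le
    have key : μ ^ 2 + 2 * c * μ - μ - c + c ^ 2 < s := by
      have hN2 : (μ ^ 2 + 2 * c * μ - μ - c + c ^ 2) ^ 2 < s ^ 2 := by
        rw [hs2]
        have hfac : 0 < 4 * c * (c + μ) * (2 * c - c * μ + 1 - μ ^ 2) := by
          have : 0 < 2 * c - c * μ + 1 - μ ^ 2 := by nlinarith
          positivity
        nlinarith [hfac]
      nlinarith [abs_nonneg (μ ^ 2 + 2 * c * μ - μ - c + c ^ 2),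
        sq_abs (μ ^ 2 + 2 * c * μ - μ - c + c ^ 2),
        le_abs_self (μ ^ 2 + 2 * c * μ - μ - c + c ^ 2)]
    have hden : 0 < 2 * c * (c + μ) := by positivity
    rw [U1]
    apply div_pos _ hden
    linarith
  · -- U2
    have hB : 0 < (c + μ) * (c ^ 2 + 5 * c - μ ^ 2 + μ) / (c - μ + 1) := by positivity
    set s := Real.sqrt ((c + μ) * (c ^ 2 + 5 * c - μ ^ 2 + μ) / (c - μ + 1)) with hs
    have hs0 : 0 < s := Real.sqrt_pos.mpr hB
    have hs2 : s ^ 2 = (c + μ) * (c ^ 2 + 5 * c - μ ^ 2 + μ) / (c - μ + 1) :=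
      Real.sq_sqrt hB.le
    have hs2' : s ^ 2 * (c - μ + 1) = (c + μ) * (c ^ 2 + 5 * c - μ ^ 2 + μ) := by
      rw [hs2]; field_simp
    have key : c - μ < s := by
      nlinarith [sq_nonneg (s - (c - μ)), mul_pos hc hcm]
    rw [U2]
    apply div_pos _ (by linarith)
    linarith
  · intro u₂ hu₂ ⟨h₁, _⟩
    have hpos : 0 < u₂ + 1 := by linarith
    have : (0 : ℝ) < (1 - μ + 1 / (u₂ + 1)) / c := by
      apply div_pos _ hc
      have : 0 < 1 / (u₂ + 1) := by positivity
      linarith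
    linarith [h₁ ▸ this]
  · intro u₁ hu₁ ⟨_, h₂⟩
    have hpos : 0 < u₁ + 1 := by linarith
    have : (0 : ℝ) < (μ + 1 / (u₁ + 1)) / c := by
      apply div_pos _ hc
      have : 0 < 1 / (u₁ + 1) := by positivity
      linarith
    linarith [h₂ ▸ this]
end
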